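/- Maximal folding height bound for the tetrahedron: for every α > 0 and every ω ∈ S², the maximal folding height of K^α in direction ω satisfies F_{K^α}(ω) ≤ 2α. -/

import Mathlib

open scoped RealInnerProductSpace

/-- The tetrahedron `K^α = {x : |x₃| ≤ α x₁, |x₂| ≤ α(1 - x₁)}`. -/
noncomputable def Kα (α : ℝ) : Set (EuclideanSpace ℝ (Fin 3)) :=
  {x | |x 2| ≤ α * x 0 ∧ |x 1| ≤ α * (1 - x 0)}

/-- The support function `H_K(ω) = sup {⟨x, ω⟩ : x ∈ K}`. -/
noncomputable def suppFn (K : Set (EuclideanSpace ℝ (Fin 3)))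
    (ω : EuclideanSpace ℝ (Fin 3)) : ℝ :=
  sSup ((fun x => ⟪x, ω⟫) '' K)

/-- The breadth `B_K(ω) = H_K(ω) + H_K(-ω)`. -/
noncomputable def breadthFn (K : Set (EuclideanSpace ℝ (Fin 3)))
    (ω : EuclideanSpace ℝ (Fin 3)) : ℝ :=
  suppFn K ω + suppFn K (-ω)

/-- The cap `K_{λ,ω} = {x ∈ K : ⟨x,ω⟩ ≥ λ}`. -/
noncomputable def capSet (K : Set (EuclideanSpace ℝ (Fin 3)))
    (ω : EuclideanSpace ℝ (Fin 3)) (lam : ℝ) : Set (EuclideanSpace ℝ (Fin 3)) :=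
  {x ∈ K | lam ≤ ⟪x, ω⟫}

/-- The reflection `T_{λ,ω}(x) = x - 2ω(⟨ω,x⟩ - λ)`. -/
noncomputable def reflMap (ω : EuclideanSpace ℝ (Fin 3)) (lam : ℝ)
    (x : EuclideanSpace ℝ (Fin 3)) : EuclideanSpace ℝ (Fin 3) :=
  x - (2 * (⟪ω, x⟫ - lam)) • ω

/-- The maximal folding cap `K_ω = ∪ {K_{λ,ω} : T_{λ,ω}(K_{λ,ω}) ⊆ K}`. -/
noncomputable def maxFoldCap (K : Set (EuclideanSpace ℝ (Fin 3)))
    (ω : EuclideanSpace ℝ (Fin 3)) : Set (EuclideanSpace ℝ (Fin 3)) :=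
  ⋃ lam ∈ {lam : ℝ | reflMap ω lam '' capSet K ω lam ⊆ K}, capSet K ω lam

/-- The maximal folding height `F_K(ω) = B_{K_ω}(ω)`. -/
noncomputable def foldHeight (K : Set (EuclideanSpace ℝ (Fin 3)))
    (ω : EuclideanSpace ℝ (Fin 3)) : ℝ :=
  breadthFn (maxFoldCap K ω) ω


/-!
`K^α` is the convex hull of the two edges `{0} × [-α, α] × {0}` and `{1} × {0} × [-α, α]`, both of
length `2α` and parallel to a coordinate axis, so every point of `K^α` lies at most `2α` above the
lowest point of one of these edges. If a fold `T_{λ,ω}` had a point of `K^α` more than `2α` above the fold plane, the lower endpoint `z`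
of that edge would lie in the cap, and `T_{λ,ω} z = z - 2hω` with `h > 0` would lie in `K^α`: the
direction `-ω` would point into `K^α` at the vertex `z`. At either kind of vertex this forces
`|ω₂| ≤ α ω₁ ≤ -|ω₃|`, i.e. `ω = 0`. Two points of `K_ω` lie in caps `K_{λ,ω}`, `K_{λ',ω}`, and both
lie in the cap with the smaller level, which bounds the breadth of `K_ω`.
-/

section Folding

variable {K : Set (EuclideanSpace ℝ (Fin 3))} {ω : EuclideanSpace ℝ (Fin 3)}

theorem capSet_antitone : Antitone (capSet K ω) :=
  fun _ _ hlam _ hx => ⟨hx.1, hlam.trans hx.2⟩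

theorem breadthFn_le_of_forall_inner_sub_le {S : Set (EuclideanSpace ℝ (Fin 3))} {c : ℝ}
    (hc : 0 ≤ c) (h : ∀ x ∈ S, ∀ y ∈ S, ⟪x, ω⟫ - ⟪y, ω⟫ ≤ c) : breadthFn S ω ≤ c := by
  rcases S.eq_empty_or_nonempty with rfl | ⟨x₀, hx₀⟩
  · simpa [breadthFn, suppFn] using hc
  have hne : ∀ v : EuclideanSpace ℝ (Fin 3), ((fun x => ⟪x, v⟫) '' S).Nonempty :=
    fun _ => ⟨_, Set.mem_image_of_mem _ hx₀⟩
  suffices suppFn S ω ≤ c - suppFn S (-ω) by rw [breadthFn]; linarith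
  refine csSup_le (hne ω) ?_
  rintro _ ⟨x, hx, rfl⟩
  suffices suppFn S (-ω) ≤ c - ⟪x, ω⟫ by linarith
  refine csSup_le (hne (-ω)) ?_
  rintro _ ⟨y, hy, rfl⟩
  linarith [h x hx y hy, inner_neg_right (𝕜 := ℝ) y ω]

theorem foldHeight_le_of_forall_cap_height_le {c : ℝ} (hc : 0 ≤ c)
    (h : ∀ lam, reflMap ω lam '' capSet K ω lam ⊆ K → ∀ x ∈ capSet K ω lam, ⟪x, ω⟫ - lam ≤ c) :
    foldHeight K ω ≤ c := by
  refine breadthFn_le_of_forall_inner_sub_le hc fun x hx y hy => ?_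
  simp only [maxFoldCap, Set.mem_iUnion, Set.mem_ofPred_eq] at hx hy
  obtain ⟨lam, hfold, hx⟩ := hx
  obtain ⟨lam', hfold', hy⟩ := hy
  rcases le_total lam lam' with hle | hle
  · linarith [h lam hfold x hx, hy.2]
  · linarith [h lam' hfold' x (capSet_antitone hle hx), hy.2]

theorem exists_pos_sub_smul_mem_of_fold {lam : ℝ} {z : EuclideanSpace ℝ (Fin 3)}
    (hfold : reflMap ω lam '' capSet K ω lam ⊆ K) (hz : z ∈ K) (hlam : lam < ⟪z, ω⟫) :
    ∃ t : ℝ, 0 < t ∧ z - t • ω ∈ K :=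
  ⟨2 * (⟪ω, z⟫ - lam), by rw [real_inner_comm]; linarith, hfold ⟨z, ⟨hz, hlam.le⟩, rfl⟩⟩

end Folding

section Tetrahedron

variable {α c t u : ℝ} {ω x : EuclideanSpace ℝ (Fin 3)}

theorem inner_eq_fin_three (x y : EuclideanSpace ℝ (Fin 3)) :
    ⟪x, y⟫ = x 0 * y 0 + x 1 * y 1 + x 2 * y 2 := by
  simp [PiLp.inner_apply, Fin.sum_univ_three]
  ring

theorem inner_le_max_of_mem_Kα (hα : 0 < α) (hx : x ∈ Kα α) :
    ⟪x, ω⟫ ≤ max (α * |ω 1|) (ω 0 + α * |ω 2|) := by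
  obtain ⟨hx2, hx1⟩ := hx
  have hx0 : 0 ≤ x 0 := by nlinarith [abs_nonneg (x 2)]
  have hx0' : x 0 ≤ 1 := by nlinarith [abs_nonneg (x 1)]
  have h1 : x 1 * ω 1 ≤ α * (1 - x 0) * |ω 1| := by
    calc x 1 * ω 1 ≤ |x 1| * |ω 1| := by rw [← abs_mul]; exact le_abs_self _
      _ ≤ α * (1 - x 0) * |ω 1| := by gcongr
  have h2 : x 2 * ω 2 ≤ α * x 0 * |ω 2| := by
    calc x 2 * ω 2 ≤ |x 2| * |ω 2| := by rw [← abs_mul]; exact le_abs_self _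
      _ ≤ α * x 0 * |ω 2| := by gcongr
  calc ⟪x, ω⟫ ≤ (1 - x 0) * (α * |ω 1|) + x 0 * (ω 0 + α * |ω 2|) := by
        rw [inner_eq_fin_three]; linarith
    _ ≤ (1 - x 0) * max (α * |ω 1|) (ω 0 + α * |ω 2|) + x 0 * max (α * |ω 1|) (ω 0 + α * |ω 2|) := by
        gcongr
        exacts [le_max_left _ _, le_max_right _ _]
    _ = max (α * |ω 1|) (ω 0 + α * |ω 2|) := by ring

theorem exists_abs_eq_mul_eq_neg (α u : ℝ) (hα : 0 ≤ α) : ∃ c, |c| = α ∧ c * u = -(α * |u|) := by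
  rcases le_total 0 u with hu | hu
  · exact ⟨-α, by simp [abs_of_nonneg hα], by rw [abs_of_nonneg hu]; ring⟩
  · exact ⟨α, abs_of_nonneg hα, by rw [abs_of_nonpos hu]; ring⟩

theorem abs_sub_mul_eq (hc : |c| = α) (hcu : c * u = -(α * |u|)) (ht : 0 ≤ t) :
    |c - t * u| = α + t * |u| := by
  have hα : 0 ≤ α := hc ▸ abs_nonneg c
  have hc2 : c ^ 2 = α ^ 2 := by rw [← sq_abs, hc]
  rw [← sq_eq_sq₀ (abs_nonneg _) (by positivity), sq_abs]
  linear_combination hc2 - 2 * t * hcu - t ^ 2 * sq_abs u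

theorem abs_le_of_vertex_zero_sub_smul_mem (hc : |c| = α) (hcu : c * ω 1 = -(α * |ω 1|))
    (ht : 0 < t) (h : !₂[0, c, 0] - t • ω ∈ Kα α) :
    |ω 1| ≤ α * ω 0 ∧ |ω 2| ≤ -(α * ω 0) := by
  obtain ⟨h2, h1⟩ := h
  simp only [Fin.isValue, PiLp.sub_apply, Matrix.cons_val_one, Matrix.cons_val_zero, PiLp.smul_apply,
    smul_eq_mul, zero_sub, sub_neg_eq_add, Matrix.cons_val, abs_neg, abs_mul, mul_neg] at h1 h2
  rw [abs_sub_mul_eq hc hcu ht.le] at h1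
  rw [abs_of_pos ht] at h2
  exact ⟨le_of_mul_le_mul_left (by linarith) ht, le_of_mul_le_mul_left (by linarith) ht⟩

theorem abs_le_of_vertex_one_sub_smul_mem (hc : |c| = α) (hcv : c * ω 2 = -(α * |ω 2|))
    (ht : 0 < t) (h : !₂[1, 0, c] - t • ω ∈ Kα α) :
    |ω 1| ≤ α * ω 0 ∧ |ω 2| ≤ -(α * ω 0) := by
  obtain ⟨h2, h1⟩ := h
  simp only [Fin.isValue, PiLp.sub_apply, Matrix.cons_val_one, Matrix.cons_val_zero, PiLp.smul_apply,
    smul_eq_mul, zero_sub, abs_neg, abs_mul, sub_sub_cancel, Matrix.cons_val] at h1 h2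
  rw [abs_sub_mul_eq hc hcv ht.le] at h2
  rw [abs_of_pos ht] at h1
  exact ⟨le_of_mul_le_mul_left (by linarith) ht, le_of_mul_le_mul_left (by linarith) ht⟩

theorem eq_zero_of_abs_le_mul_of_abs_le_neg_mul (hα : 0 < α) (h1 : |ω 1| ≤ α * ω 0)
    (h2 : |ω 2| ≤ -(α * ω 0)) : ω = 0 := by
  have hω1 : ω 1 = 0 := abs_eq_zero.mp (by linarith [abs_nonneg (ω 1), abs_nonneg (ω 2)])
  have hω2 : ω 2 = 0 := abs_eq_zero.mp (by linarith [abs_nonneg (ω 1), abs_nonneg (ω 2)])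
  have hω0 : ω 0 = 0 := by
    have : α * ω 0 = 0 := by linarith [abs_nonneg (ω 1), abs_nonneg (ω 2)]
    exact (mul_eq_zero.mp this).resolve_left hα.ne'
  ext i
  fin_cases i <;> simpa

theorem inner_sub_le_of_mem_capSet_Kα (hα : 0 < α) (hω : ‖ω‖ = 1) {lam : ℝ}
    (hfold : reflMap ω lam '' capSet (Kα α) ω lam ⊆ Kα α) (hx : x ∈ capSet (Kα α) ω lam) :
    ⟪x, ω⟫ - lam ≤ 2 * α := by
  by_contra! hgap
  have habs (i : Fin 3) : |ω i| ≤ 1 := hω ▸ PiLp.norm_apply_le ω i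
  suffices |ω 1| ≤ α * ω 0 ∧ |ω 2| ≤ -(α * ω 0) by
    simpa [hω] using congrArg norm (eq_zero_of_abs_le_mul_of_abs_le_neg_mul hα this.1 this.2)
  rcases le_max_iff.mp (inner_le_max_of_mem_Kα (ω := ω) hα hx.1) with hx' | hx'
  · obtain ⟨c, hc, hcu⟩ := exists_abs_eq_mul_eq_neg α (ω 1) hα.le
    have hzω : ⟪!₂[0, c, 0], ω⟫ = -(α * |ω 1|) := by simp [inner_eq_fin_three !₂[0, c, 0], hcu]
    obtain ⟨t, ht, hz⟩ :=
      exists_pos_sub_smul_mem_of_fold (z := !₂[0, c, 0]) hfold (by simp [Kα, hc])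
        (by nlinarith [habs 1])
    exact abs_le_of_vertex_zero_sub_smul_mem hc hcu ht hz
  · obtain ⟨c, hc, hcv⟩ := exists_abs_eq_mul_eq_neg α (ω 2) hα.le
    have hzω : ⟪!₂[1, 0, c], ω⟫ = ω 0 - α * |ω 2| := by
      simp [inner_eq_fin_three !₂[1, 0, c], hcv, sub_eq_add_neg]
    obtain ⟨t, ht, hz⟩ :=
      exists_pos_sub_smul_mem_of_fold (z := !₂[1, 0, c]) hfold (by simp [Kα, hc])
        (by nlinarith [habs 2])
    exact abs_le_of_vertex_one_sub_smul_mem hc hcv ht hz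

end Tetrahedron

/-- For every `α > 0` and unit vector `ω ∈ S²`, the maximal folding height of the
tetrahedron `K^α` satisfies `F_{K^α}(ω) ≤ 2α`. -/
theorem foldHeight_Kα_le (α : ℝ) (hα : 0 < α)
    (ω : EuclideanSpace ℝ (Fin 3)) (hω : ‖ω‖ = 1) :
    foldHeight (Kα α) ω ≤ 2 * α :=
  foldHeight_le_of_forall_cap_height_le (by positivity) fun _ hfold _ hx =>
    inner_sub_le_of_mem_capSet_Kα hα hω hfold hx
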